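/- arXiv:1304.7261 — 3 statements merged into one kernel-verified Lean document; each statement's English description precedes it below -/
import Mathlib

section
/- Let H be a finite-dimensional Hopf algebra over a field k. Then H is local as a ring (has a unique maximal left ideal) if and only if its augmentation ideal H⁺ = ker ε is a nilpotent ideal. -/
lemma mul_top_aux {H : Type*} [Ring H] (m : Ideal H)
    (htwo : ∀ a ∈ m, ∀ h : H, a * h ∈ m) : m * ⊤ = m := by
  refine le_antisymm (Ideal.mul_le.2 fun r hr s _ => htwo r hr s) (fun i hi => ?_)
  have := Ideal.mul_mem_mul hi (Submodule.mem_top : (1 : H) ∈ ⊤)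
  simpa using this

lemma pow_succ_left_aux {H : Type*} [Ring H] (m : Ideal H)
    (htwo : ∀ a ∈ m, ∀ h : H, a * h ∈ m) : ∀ n : ℕ, m ^ (n + 1) = m * m ^ n
  | 0 => by
    have h0 : (m ^ 0 : Ideal H) = ⊤ := by
      rw [show (m ^ 0 : Ideal H) = 1 from rfl, Ideal.one_eq_top]
    show m ^ 0 * m = m * m ^ 0
    rw [h0, Ideal.top_mul, mul_top_aux m htwo]
  | (n + 1) => by
    have h : m ^ n * m = m * m ^ n := pow_succ_left_aux m htwo n
    show m ^ n * m * m = m * (m ^ n * m)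
    rw [h, Ideal.mul_assoc, h]

/-- Noncommutative Nakayama for finitely generated left ideals. -/
lemma nak_aux {H : Type*} [Ring H] (m : Ideal H)
    (htwo : ∀ a ∈ m, ∀ h : H, a * h ∈ m)
    (hunit : ∀ c ∈ m, IsUnit (1 - c)) :
    ∀ s : Finset H, ∀ N : Ideal H, N = Ideal.span ↑s → N ≤ m * N → N = ⊥ := by
  classical
  intro s
  induction s using Finset.induction_on with
  | empty =>
    intro N hN _
    rw [Finset.coe_empty, Ideal.span_empty] at hN
    exact hN
  | @insert x t hx ih =>
    intro N hN hle
    -- x ∈ span t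
    have hxN : x ∈ N := hN ▸ Ideal.subset_span (by simp)
    have hxmN : x ∈ m * N := hle hxN
    have hsplit : m * N = m * Ideal.span {x} ⊔ m * Ideal.span (↑t : Set H) := by
      rw [hN]
      rw [Finset.coe_insert, Ideal.span_insert, Ideal.mul_sup]
    rw [hsplit] at hxmN
    obtain ⟨a, ha, b, hb, hab⟩ := Submodule.mem_sup.mp hxmN
    -- every element of m * span {x} has the form c * x with c ∈ m
    have hform : ∀ z ∈ m * Ideal.span ({x} : Set H), ∃ c ∈ m, z = c * x := by
      intro z hz
      refine Submodule.smul_induction_on hz ?_ ?_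
      · intro r hr n hn
        obtain ⟨h, rfl⟩ := Submodule.mem_span_singleton.mp hn
        exact ⟨r * h, htwo r hr h, by simp [smul_eq_mul, mul_assoc]⟩
      · rintro y z ⟨c, hc, rfl⟩ ⟨c', hc', rfl⟩
        exact ⟨c + c', m.add_mem hc hc', (add_mul c c' x).symm⟩
    obtain ⟨c, hc, rfl⟩ := hform a ha
    have hbt : b ∈ Ideal.span (↑t : Set H) := Ideal.mul_le_right hb
    have hux : (1 - c) * x = b := by
      rw [sub_mul, one_mul]
      have := hab
      linear_combination (norm := noncomm_ring) -this
    obtain ⟨u, hu⟩ := hunit c hc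
    have hxspan : x ∈ Ideal.span (↑t : Set H) := by
      have : x = ↑u⁻¹ * b := by
        rw [← hux, ← hu, ← mul_assoc, Units.inv_mul, one_mul]
      rw [this]
      exact Ideal.mul_mem_left _ _ hbt
    have hNt : N = Ideal.span (↑t : Set H) := by
      rw [hN]
      refine le_antisymm (Ideal.span_le.mpr ?_) (Ideal.span_mono (by simp))
      intro y hy
      simp only [Finset.coe_insert, Set.mem_insert_iff] at hy
      rcases hy with rfl | hy
      · exact hxspan
      · exact Ideal.subset_span hy
    exact ih N hNt hle

/-- A finite-dimensional Hopf algebra over a field is local (unique maximal left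
ideal) if and only if its augmentation ideal `ker ε` is nilpotent. -/
theorem stmt_0 (k H : Type*) [Field k] [Ring H] [HopfAlgebra k H]
    [FiniteDimensional k H] :
    IsLocalRing H ↔
      ∃ n : ℕ, (RingHom.ker (Bialgebra.counitAlgHom k H).toRingHom) ^ n = ⊥ := by
  set ε := (Bialgebra.counitAlgHom k H).toRingHom with hε
  set m := RingHom.ker ε with hm
  have hnontriv : Nontrivial H := by
    refine ⟨1, 0, fun h => ?_⟩
    have : (1 : k) = 0 := by
      have := congrArg ε h
      simpa using this
    exact one_ne_zero this
  have hnonunit : ∀ x ∈ m, ¬ IsUnit x := by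
    intro x hx hux
    have : IsUnit (ε x) := hux.map ε
    rw [RingHom.mem_ker.mp hx] at this
    exact not_isUnit_zero this
  have htwo : ∀ a ∈ m, ∀ h : H, a * h ∈ m := by
    intro a ha h
    rw [hm, RingHom.mem_ker] at ha ⊢
    rw [map_mul, ha, zero_mul]
  constructor
  · intro hloc
    have hunit : ∀ c ∈ m, IsUnit (1 - c) := by
      intro c hc
      rcases IsLocalRing.isUnit_or_isUnit_of_add_one (a := c) (b := 1 - c) (by abel) with h | h
      · exact absurd h (hnonunit c hc)
      · exact h
    have : IsArtinianRing H := IsArtinianRing.of_finite k H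
    obtain ⟨n, hn⟩ := IsArtinian.monotone_stabilizes (R := H) (M := H)
      ⟨fun n => m ^ n, fun a b h => Ideal.pow_le_pow_right h⟩
    refine ⟨n, ?_⟩
    have hstab : m ^ n = m * m ^ n :=
      (hn (n + 1) (Nat.le_succ n)).trans (pow_succ_left_aux m htwo n)
    have : IsNoetherian H H := isNoetherian_of_tower k inferInstance
    obtain ⟨s, hs⟩ := IsNoetherian.noetherian (m ^ n)
    exact nak_aux m htwo hunit s (m ^ n) hs.symm hstab.le
  · rintro ⟨n, hn⟩
    refine ⟨fun {a b} hab => ?_⟩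
    have hk : ε a + ε b = 1 := by rw [← map_add, hab, map_one]
    have key : ∀ x : H, ε x ≠ 0 → IsUnit x := by
      intro x hx
      have hmem : x - algebraMap k H (ε x) ∈ m := by
        rw [hm, RingHom.mem_ker, map_sub]
        have h1 : ε (algebraMap k H (ε x)) = ε x := by
          simp [hε]
        rw [h1, sub_self]
      have hnil : IsNilpotent (x - algebraMap k H (ε x)) := by
        refine ⟨n, ?_⟩
        have := Ideal.pow_mem_pow hmem n
        rw [hn] at this
        simpa using this
      have huA : IsUnit (algebraMap k H (ε x)) :=
        (IsUnit.mk0 _ hx).map (algebraMap k H)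
      have hcomm : Commute (x - algebraMap k H (ε x)) (algebraMap k H (ε x)) := by
        apply Commute.sub_left
        · exact (Algebra.commutes (ε x) x).symm
        · exact Commute.refl _
      have := hnil.isUnit_add_right_of_commute huA hcomm
      simpa using this
    by_cases ha : ε a = 0
    · right
      apply key
      intro hb
      rw [ha, hb] at hk
      simpa using hk
    · exact Or.inl (key a ha)
end

section
/- Let H be a finite-dimensional Hopf algebra over a field k and E ⊇ k a field extension. Then H is local if and only if H ⊗_k E is local. -/
set_option maxHeartbeats 1000000

open TensorProduct Module Pointwise

section AugLemmas

variable {F A : Type*} [Field F] [Ring A] [Algebra F A]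

/-- If the augmentation ideal (kernel of an algebra map to the base field) is
nilpotent, the algebra is local. -/
theorem local_of_aug_nilpotent (ε : A →ₐ[F] F) (n : ℕ)
    (h : (LinearMap.ker ε.toLinearMap) ^ n = ⊥) : IsLocalRing A := by
  have hnt : Nontrivial A := by
    refine ⟨1, 0, fun h01 => ?_⟩
    have : (1 : F) = 0 := by simpa using congrArg ε h01
    exact one_ne_zero this
  have key : ∀ a : A, ε a ≠ 0 → IsUnit a := by
    intro a ha
    set c : F := ε a with hc
    set m : A := algebraMap F A c - a with hm
    have hmM : m ∈ LinearMap.ker ε.toLinearMap := by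
      simp [hm, LinearMap.mem_ker, ← hc]
    have hmn : m ^ n = 0 := by
      have := Submodule.pow_mem_pow _ hmM n
      rw [h] at this
      simpa using this
    have hcomm : Commute (algebraMap F A c⁻¹) m := (Algebra.commutes c⁻¹ m)
    have hnil : IsNilpotent (algebraMap F A c⁻¹ * m) := by
      refine ⟨n, ?_⟩
      rw [hcomm.mul_pow, hmn, mul_zero]
    have hu1 : IsUnit (1 - algebraMap F A c⁻¹ * m) := hnil.isUnit_one_sub
    have hu2 : IsUnit (algebraMap F A c) := (isUnit_iff_ne_zero.mpr ha).map (algebraMap F A)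
    have : a = algebraMap F A c * (1 - algebraMap F A c⁻¹ * m) := by
      rw [mul_sub, mul_one, ← mul_assoc, ← map_mul, mul_inv_cancel₀ ha, map_one, one_mul, hm]
      exact (sub_sub_cancel _ _).symm
    rw [this]
    exact hu2.mul hu1
  refine ⟨fun {a b} hab => ?_⟩
  by_cases ha : ε a = 0
  · refine Or.inr (key b ?_)
    have : ε a + ε b = 1 := by rw [← map_add, hab, map_one]
    rw [ha, zero_add] at this
    simp [this]
  · exact Or.inl (key a ha)

/-- In a finite-dimensional local algebra, the augmentation ideal is nilpotent. -/
theorem aug_nilpotent_of_local [FiniteDimensional F A] (ε : A →ₐ[F] F)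
    (h : IsLocalRing A) : ∃ n, (LinearMap.ker ε.toLinearMap) ^ n = ⊥ := by
  classical
  set M : Submodule F A := LinearMap.ker ε.toLinearMap with hMdef
  have hMM : M * M ≤ M := by
    rw [Submodule.mul_le]
    intro x hx y hy
    rw [hMdef, LinearMap.mem_ker] at *
    simp only [AlgHom.toLinearMap_apply] at *
    rw [map_mul, hx, zero_mul]
  have hpow_le : ∀ i : ℕ, M ^ (i + 1) ≤ M := by
    intro i
    induction i with
    | zero => rw [pow_one]
    | succ i ih =>
      calc M ^ (i + 2) = M ^ (i + 1) * M := by rw [pow_succ]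
      _ ≤ M * M := mul_le_mul' ih le_rfl
      _ ≤ M := hMM
  have hanti : ∀ i : ℕ, M ^ (i + 2) ≤ M ^ (i + 1) := by
    intro i
    calc M ^ (i + 2) = M ^ (i + 1) * M := by rw [pow_succ]
    _ ≤ M ^ (i+1) * M ^ 1 := by rw [pow_one]
    _ ≤ M ^ i * M * M := by rw [pow_succ, pow_one]
    _ = M ^ i * (M * M) := by rw [mul_assoc]
    _ ≤ M ^ i * M := mul_le_mul' le_rfl hMM
    _ = M ^ (i + 1) := by rw [pow_succ]
  -- stabilization of the chain of powers
  obtain ⟨i, hi⟩ : ∃ i : ℕ, M ^ (i + 2) = M ^ (i + 1) := by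
    by_contra hcon
    push_neg at hcon
    have hlt : ∀ i : ℕ, finrank F (M ^ (i + 2) : Submodule F A) <
        finrank F (M ^ (i + 1) : Submodule F A) := by
      intro i
      refine lt_of_le_of_ne (Submodule.finrank_mono (hanti i)) (fun he => hcon i ?_)
      exact Submodule.eq_of_le_of_finrank_eq (hanti i) he
    have hsum : ∀ j : ℕ, finrank F (M ^ (j + 1) : Submodule F A) + j ≤
        finrank F (M ^ 1 : Submodule F A) := by
      intro j
      induction j with
      | zero => simp
      | succ j ih =>
        have h1 := hlt j
        have h2 : j + 1 + 1 = j + 2 := by omega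
        rw [h2]
        omega
    have := hsum (finrank F (M ^ 1 : Submodule F A) + 1)
    omega
  set N : Submodule F A := M ^ (i + 1) with hNdef
  have hNN : N * N = N := by
    have hstab : ∀ j : ℕ, M ^ (i + 1 + j) = M ^ (i + 1) := by
      intro j
      induction j with
      | zero => rfl
      | succ j ih =>
        have : i + 1 + (j + 1) = (i + 1 + j) + 1 := by omega
        rw [this, pow_succ, ih, ← pow_succ]
        exact hi
    calc N * N = M ^ ((i + 1) + (i + 1)) := by rw [hNdef, ← pow_add]
    _ = M ^ (i + 1 + (i + 1)) := rfl
    _ = N := hstab (i + 1)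
  refine ⟨i + 1, ?_⟩
  by_contra hN
  -- the set of "dimensions of N-stable subspaces W with N * W ≠ ⊥" is nonempty
  have hPN : N * N ≤ N ∧ N * N ≠ ⊥ := ⟨le_of_eq hNN, by rw [hNN]; exact hN⟩
  have hne : ∃ d : ℕ, ∃ W : Submodule F A, (N * W ≤ W ∧ N * W ≠ ⊥) ∧ finrank F W = d :=
    ⟨finrank F N, N, hPN, rfl⟩
  obtain ⟨W, hW, hWrank⟩ := Nat.find_spec hne
  have hmin : ∀ W' : Submodule F A, (N * W' ≤ W' ∧ N * W' ≠ ⊥) →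
      finrank F W ≤ finrank F W' := by
    intro W' hW'
    rw [hWrank]
    exact Nat.find_le ⟨W', hW', rfl⟩
  -- pick x in W with N * span {x} ≠ ⊥
  obtain ⟨x, hxW, hx⟩ : ∃ x ∈ W, N * Submodule.span F {x} ≠ ⊥ := by
    by_contra hcon
    push_neg at hcon
    apply hW.2
    rw [eq_bot_iff, Submodule.mul_le]
    intro a ha w hw
    have := hcon w hw
    rw [eq_bot_iff, Submodule.mul_le] at this
    exact this a ha w (Submodule.mem_span_singleton_self w)
  set W' : Submodule F A := N * Submodule.span F {x} with hW'def
  have hspanW : Submodule.span F {x} ≤ W := by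
    rw [Submodule.span_le, Set.singleton_subset_iff]; exact hxW
  have hW'W : W' ≤ W := le_trans (mul_le_mul' le_rfl hspanW) hW.1
  have hPW' : N * W' ≤ W' ∧ N * W' ≠ ⊥ := by
    have : N * W' = W' := by
      rw [hW'def, ← mul_assoc, hNN]
    exact ⟨le_of_eq this, by rw [this]; exact hx⟩
  have hWW' : W' = W := by
    refine Submodule.eq_of_le_of_finrank_eq hW'W ?_
    exact le_antisymm (Submodule.finrank_mono hW'W) (hmin W' hPW')
  have hxW' : x ∈ W' := hWW' ▸ hxW
  -- x ∈ N * span {x} means x = a * x for some a ∈ N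
  have hmap : W' ≤ Submodule.map (LinearMap.mulRight F x) N := by
    rw [hW'def, Submodule.mul_le]
    intro a ha y hy
    obtain ⟨c, rfl⟩ := Submodule.mem_span_singleton.mp hy
    refine ⟨c • a, Submodule.smul_mem _ _ ha, ?_⟩
    simp [LinearMap.mulRight_apply, mul_smul_comm, smul_mul_assoc]
  obtain ⟨a, haN, hax⟩ := hmap hxW'
  simp only [LinearMap.mulRight_apply] at hax
  -- a is a nonunit, so 1 - a is a unit, so x = 0
  have haM : a ∈ M := hpow_le i haN
  have hanu : ¬ IsUnit a := by
    intro hu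
    have : IsUnit (ε a) := hu.map ε
    rw [hMdef, LinearMap.mem_ker] at haM
    simp only [AlgHom.toLinearMap_apply] at haM
    rw [haM] at this
    exact not_isUnit_zero this
  have h1a : IsUnit (1 - a) := by
    rcases h.isUnit_or_isUnit_of_add_one (a := a) (b := 1 - a) (by abel) with h' | h'
    · exact absurd h' hanu
    · exact h'
  have hx0 : x = 0 := by
    have : (1 - a) * x = 0 := by rw [sub_mul, one_mul, hax, sub_self]
    obtain ⟨u, hu⟩ := h1a
    calc x = (u⁻¹ : Aˣ) * (u * x) := by rw [← mul_assoc, Units.inv_mul, one_mul]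
    _ = (u⁻¹ : Aˣ) * ((1 - a) * x) := by rw [hu]
    _ = 0 := by rw [this, mul_zero]
  apply hx
  rw [hW'def, hx0, Submodule.span_zero_singleton, Submodule.mul_bot]

end AugLemmas

theorem isLocalRing_of_ringEquiv {R S : Type*} [Semiring R] [Semiring S] (e : R ≃+* S)
    (h : IsLocalRing R) : IsLocalRing S := by
  haveI : Nontrivial S := e.symm.toEquiv.nontrivial
  refine ⟨fun {a b} hab => ?_⟩
  have : e.symm a + e.symm b = 1 := by rw [← map_add, hab, map_one]
  rcases h.isUnit_or_isUnit_of_add_one this with h1 | h1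
  · exact Or.inl (by simpa using h1.map e.toRingHom)
  · exact Or.inr (by simpa using h1.map e.toRingHom)

open TensorProduct in
/-- A finite-dimensional Hopf algebra `H` over a field `k` is local if and only if
its base change `H ⊗[k] E` to a field extension `E ⊇ k` is local. -/
theorem stmt_2 (k E H : Type*) [Field k] [Field E] [Algebra k E] [Ring H]
    [HopfAlgebra k H] [FiniteDimensional k H] :
    IsLocalRing H ↔ IsLocalRing (H ⊗[k] E) := by
  classical
  set ε : H →ₐ[k] k := Bialgebra.counitAlgHom k H with hεdef
  set ε' : E ⊗[k] H →ₐ[E] E :=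
    Algebra.TensorProduct.lift (AlgHom.id E E)
      ((Algebra.ofId k E).comp (Bialgebra.counitAlgHom k H))
      (fun x y => Commute.all _ _) with hε'def
  set φ : H →ₐ[k] E ⊗[k] H := Algebra.TensorProduct.includeRight with hφdef
  set M : Submodule k H := LinearMap.ker ε.toLinearMap with hM
  set M' : Submodule E (E ⊗[k] H) := LinearMap.ker ε'.toLinearMap with hM'
  have hε'tmul : ∀ (e : E) (h : H), ε' (e ⊗ₜ[k] h) = e * algebraMap k E (ε h) := by
    intro e h
    rw [hε'def]
    rw [Algebra.TensorProduct.lift_tmul]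
    rfl
  have hφM : ∀ m ∈ M, φ m ∈ M' := by
    intro m hm
    rw [hM, LinearMap.mem_ker] at hm
    simp only [AlgHom.toLinearMap_apply] at hm
    rw [hM', LinearMap.mem_ker]
    simp only [AlgHom.toLinearMap_apply, hφdef, Algebra.TensorProduct.includeRight_apply]
    rw [hε'tmul, hm, map_zero, mul_zero]
  -- M' is the E-span of φ(M)
  have hspan : M' = Submodule.span E (φ.toLinearMap '' M) := by
    apply le_antisymm
    · -- key direction
      have htop : Submodule.span E (φ.toLinearMap '' M) ⊔
          Submodule.span E {(1 : E ⊗[k] H)} = ⊤ := by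
        rw [eq_top_iff]
        intro z hztriv
        clear hztriv
        induction z using TensorProduct.induction_on with
        | zero => exact Submodule.zero_mem _
        | tmul e h =>
          have key1 : e ⊗ₜ[k] (algebraMap k H (ε h)) =
              (e * algebraMap k E (ε h)) ⊗ₜ[k] (1 : H) := by
            rw [Algebra.algebraMap_eq_smul_one, TensorProduct.tmul_smul,
              TensorProduct.smul_tmul', Algebra.smul_def, mul_comm]
          have hdecomp : e ⊗ₜ[k] h =
              e • ((1 : E) ⊗ₜ[k] (h - algebraMap k H (ε h))) +
              (e * algebraMap k E (ε h)) • (1 : E ⊗[k] H) := by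
            rw [Algebra.TensorProduct.one_def]
            rw [TensorProduct.smul_tmul', TensorProduct.smul_tmul']
            rw [smul_eq_mul, mul_one, smul_eq_mul, mul_one]
            rw [TensorProduct.tmul_sub, key1]
            rw [sub_add_cancel]
          rw [hdecomp]
          refine Submodule.add_mem _ ?_ ?_
          · refine Submodule.smul_mem _ _ (Submodule.mem_sup_left ?_)
            refine Submodule.subset_span ⟨h - algebraMap k H (ε h), ?_, rfl⟩
            simp only [SetLike.mem_coe, hM, LinearMap.mem_ker, AlgHom.toLinearMap_apply,
              map_sub, AlgHom.commutes, Algebra.algebraMap_self, RingHom.id_apply, sub_self]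
          · exact Submodule.smul_mem _ _ (Submodule.mem_sup_right (Submodule.subset_span rfl))
        | add u v hu hv => exact Submodule.add_mem _ hu hv
      intro z hz
      have hzmem : z ∈ Submodule.span E (φ.toLinearMap '' M) ⊔
          Submodule.span E {(1 : E ⊗[k] H)} := htop ▸ Submodule.mem_top
      obtain ⟨t, ht, s, hs, rfl⟩ := Submodule.mem_sup.mp hzmem
      obtain ⟨c, rfl⟩ := Submodule.mem_span_singleton.mp hs
      have htM' : t ∈ M' := by
        have : Submodule.span E (φ.toLinearMap '' M) ≤ M' := by
          rw [Submodule.span_le]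
          rintro _ ⟨m, hm, rfl⟩
          exact hφM m hm
        exact this ht
      rw [hM', LinearMap.mem_ker] at hz htM'
      simp only [AlgHom.toLinearMap_apply] at hz htM'
      rw [map_add, htM', zero_add] at hz
      have hε'one : ε' (c • (1 : E ⊗[k] H)) = c := by
        rw [map_smul, map_one, smul_eq_mul, mul_one]
      rw [hε'one] at hz
      rw [hz, zero_smul, add_zero]
      exact ht
    · rw [Submodule.span_le]
      rintro _ ⟨m, hm, rfl⟩
      exact hφM m hm
  -- powers of M' are controlled by powers of M
  have hpow_le : ∀ n : ℕ, M' ^ (n + 1) ≤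
      Submodule.span E (φ.toLinearMap '' (M ^ (n + 1) : Submodule k H)) := by
    intro n
    induction n with
    | zero => rw [pow_one, pow_one]; exact le_of_eq hspan
    | succ n ih =>
      rw [pow_succ]
      calc M' ^ (n + 1) * M'
          ≤ Submodule.span E (φ.toLinearMap '' (M ^ (n + 1) : Submodule k H)) *
            Submodule.span E (φ.toLinearMap '' M) :=
            mul_le_mul' ih (le_of_eq hspan)
        _ = Submodule.span E ((φ.toLinearMap '' (M ^ (n + 1) : Submodule k H)) *
            (φ.toLinearMap '' M)) := Submodule.span_mul_span E _ _
        _ ≤ Submodule.span E (φ.toLinearMap '' (M ^ (n + 2) : Submodule k H)) := by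
            refine Submodule.span_mono ?_
            rw [Set.mul_subset_iff]
            rintro _ ⟨p, hp, rfl⟩ _ ⟨q, hq, rfl⟩
            refine ⟨p * q, ?_, by simp⟩
            have : M ^ (n + 2) = M ^ (n + 1) * M := by rw [pow_succ]
            rw [this]
            exact Submodule.mul_mem_mul hp hq
  -- injectivity of φ
  have hφinj : Function.Injective φ := by
    have hι : Function.Injective (Algebra.linearMap k E) := by
      intro a b hab
      exact (algebraMap k E).injective hab
    have hr : Function.Injective (LinearMap.rTensor H (Algebra.linearMap k E)) :=
      Module.Flat.rTensor_preserves_injective_linearMap _ hι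
    intro a b hab
    have : LinearMap.rTensor H (Algebra.linearMap k E) ((TensorProduct.lid k H).symm a)
        = LinearMap.rTensor H (Algebra.linearMap k E) ((TensorProduct.lid k H).symm b) := by
      simp only [TensorProduct.lid_symm_apply, LinearMap.rTensor_tmul, Algebra.linearMap_apply,
        map_one]
      exact hab
    exact (TensorProduct.lid k H).symm.injective (hr this)
  -- transfer of nilpotency
  have htransfer : (∃ n, M ^ n = ⊥) ↔ (∃ n, M' ^ n = ⊥) := by
    constructor
    · rintro ⟨n, hn⟩
      refine ⟨n + 1, ?_⟩
      have hn' : M ^ (n + 1) = ⊥ := by rw [pow_succ, hn, Submodule.bot_mul]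
      rw [eq_bot_iff]
      refine le_trans (hpow_le n) ?_
      rw [hn']
      rw [Submodule.span_le]
      rintro _ ⟨m, hm, rfl⟩
      simp only [Submodule.bot_coe, Set.mem_singleton_iff] at hm
      simp [hm]
    · rintro ⟨n, hn⟩
      refine ⟨n + 1, ?_⟩
      have hn' : M' ^ (n + 1) = ⊥ := by rw [pow_succ, hn, Submodule.bot_mul]
      -- restrict scalars compatibility
      have hrestrict : ∀ m : ℕ, (Submodule.map φ.toLinearMap M) ^ (m + 1) ≤
          Submodule.restrictScalars k (M' ^ (m + 1)) := by
        intro m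
        induction m with
        | zero =>
          rw [pow_one, pow_one]
          rintro _ ⟨x, hx, rfl⟩
          exact hφM x hx
        | succ m ih =>
          rw [pow_succ]
          rw [Submodule.mul_le]
          intro p hp q hq
          have hp' : p ∈ M' ^ (m + 1) := ih hp
          have hq' : q ∈ M' := by
            obtain ⟨x, hx, rfl⟩ := hq
            exact hφM x hx
          rw [Submodule.restrictScalars_mem, pow_succ]
          exact Submodule.mul_mem_mul hp' hq'
      rw [eq_bot_iff]
      intro x hx
      have : φ.toLinearMap x ∈ Submodule.map φ.toLinearMap (M ^ (n + 1)) :=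
        Submodule.mem_map_of_mem hx
      rw [Submodule.map_pow] at this
      have := hrestrict n this
      rw [hn'] at this
      simp only [Submodule.restrictScalars_bot, Submodule.mem_bot] at this
      have : φ x = 0 := this
      have hx0 : x = 0 := hφinj (by rw [this, map_zero])
      simp [hx0]
  -- assemble
  have e1 : IsLocalRing H ↔ (∃ n, M ^ n = ⊥) := by
    constructor
    · intro h; exact aug_nilpotent_of_local ε h
    · rintro ⟨n, hn⟩; exact local_of_aug_nilpotent ε n hn
  have e2 : IsLocalRing (E ⊗[k] H) ↔ (∃ n, M' ^ n = ⊥) := by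
    constructor
    · intro h; exact aug_nilpotent_of_local ε' h
    · rintro ⟨n, hn⟩; exact local_of_aug_nilpotent ε' n hn
  have e3 : IsLocalRing (H ⊗[k] E) ↔ IsLocalRing (E ⊗[k] H) := by
    constructor
    · exact isLocalRing_of_ringEquiv (Algebra.TensorProduct.comm k H E).toRingEquiv
    · exact isLocalRing_of_ringEquiv (Algebra.TensorProduct.comm k E H).toRingEquiv
  rw [e1, e3, e2, htransfer]
end

section
/- Let K = k[x₁,…,x_d]/(x₁^{p^{e₁}},…,x_d^{p^{e_d}}) over a field k of characteristic p > 0, with maximal ideal J and J_{n} the ideal generated by the p^n-th powers of the generators. Then dim_k(Γ_{n-1}/Γ_n) = p^{dim_k(J_{n-1}/(J^{p^{n-1}+1} ∩ J_{n-1}))}, where Γ_m is the subalgebra generated by {x_i^{p^m}}. -/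
set_option synthInstance.maxHeartbeats 1000000
set_option maxHeartbeats 1000000

noncomputable section

open MvPolynomial

namespace Stmt11Aux
open MvPolynomial

variable {k : Type*} [Field k] {d : ℕ}

/-- truncation: kill monomials with exponent in `S`. -/
def trunc (k : Type*) [Field k] {d : ℕ} (S : Set (Fin d →₀ ℕ)) :
    MvPolynomial (Fin d) k →ₗ[k] MvPolynomial (Fin d) k :=
  letI := Classical.decPred (· ∈ S)
  (basisMonomials (Fin d) k).constr k fun m => if m ∈ S then 0 else monomial m 1

open Classical in
lemma trunc_monomial (S : Set (Fin d →₀ ℕ)) (m : Fin d →₀ ℕ) :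
    trunc k S (monomial m 1) = if m ∈ S then (0 : MvPolynomial (Fin d) k) else monomial m 1 :=
  (basisMonomials (Fin d) k).constr_basis k _ m

lemma trunc_monomial_mem {S : Set (Fin d →₀ ℕ)} {m : Fin d →₀ ℕ} (h : m ∈ S) :
    trunc k S (monomial m (1:k)) = 0 := by
  classical rw [trunc_monomial, if_pos h]

lemma trunc_monomial_not_mem {S : Set (Fin d →₀ ℕ)} {m : Fin d →₀ ℕ} (h : m ∉ S) :
    trunc k S (monomial m (1:k)) = monomial m 1 := by
  classical rw [trunc_monomial, if_neg h]

lemma monomial_mem_restrictSupport {S : Set (Fin d →₀ ℕ)} {m : Fin d →₀ ℕ} (h : m ∈ S) (c : k) :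
    monomial m c ∈ restrictSupport k S := by
  rw [mem_restrictSupport_iff]
  intro x hx
  have := MvPolynomial.support_monomial_subset (s := m) (a := c) hx
  simp only [Finset.mem_singleton] at this
  subst this; exact h

lemma restrictSupport_eq_span (S : Set (Fin d →₀ ℕ)) :
    restrictSupport k S = Submodule.span k ((fun m => monomial m (1:k)) '' S) := by
  exact MvPolynomial.restrictSupport_eq_span (R := k) S

lemma restrictSupport_le_iff {S : Set (Fin d →₀ ℕ)} {N : Submodule k (MvPolynomial (Fin d) k)} :
    restrictSupport k S ≤ N ↔ ∀ m ∈ S, monomial m (1:k) ∈ N := by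
  rw [restrictSupport_eq_span, Submodule.span_le]
  constructor
  · intro h m hm; exact h ⟨m, hm, rfl⟩
  · rintro h _ ⟨m, hm, rfl⟩; exact h m hm

lemma trunc_mem_restrictSupport {S A : Set (Fin d →₀ ℕ)} {f : MvPolynomial (Fin d) k}
    (hf : f ∈ restrictSupport k A) : trunc k S f ∈ restrictSupport k (A \ S) := by
  classical
  have : restrictSupport k A ≤ Submodule.comap (trunc k S) (restrictSupport k (A \ S)) := by
    rw [restrictSupport_le_iff]
    intro m hm
    simp only [Submodule.mem_comap, trunc_monomial]
    split_ifs with h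
    · exact zero_mem _
    · exact monomial_mem_restrictSupport (show _ ∈ _ \ _ from ⟨hm, h⟩) 1
  exact this hf

lemma sub_trunc_mem (S : Set (Fin d →₀ ℕ)) (f : MvPolynomial (Fin d) k) :
    f - trunc k S f ∈ restrictSupport k S := by
  classical
  have : f ∈ (⊤ : Submodule k (MvPolynomial (Fin d) k)) := trivial
  rw [← (basisMonomials (Fin d) k).span_eq] at this
  induction this using Submodule.span_induction with
  | mem x hx =>
    obtain ⟨m, rfl⟩ := hx
    show monomial m 1 - trunc k S (monomial m 1) ∈ _
    rw [trunc_monomial]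
    split_ifs with h
    · simpa using monomial_mem_restrictSupport h (1:k)
    · simp
  | zero => simp
  | add x y _ _ hx hy =>
    rw [map_add]
    convert add_mem hx hy using 1
    abel
  | smul c x _ hx =>
    rw [map_smul]
    convert Submodule.smul_mem _ c hx using 1
    rw [smul_sub]

lemma trunc_eq_zero_of_mem {S : Set (Fin d →₀ ℕ)} {f : MvPolynomial (Fin d) k}
    (hf : f ∈ restrictSupport k S) : trunc k S f = 0 := by
  have : restrictSupport k S ≤ LinearMap.ker (trunc k S) := by
    rw [restrictSupport_le_iff]
    intro m hm
    simp [LinearMap.mem_ker, trunc_monomial_mem hm]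
  exact this hf

lemma trunc_eq_self {S A : Set (Fin d →₀ ℕ)} {f : MvPolynomial (Fin d) k}
    (hf : f ∈ restrictSupport k A) (hAS : A ∩ S = ∅) : trunc k S f = f := by
  have : restrictSupport k A ≤ LinearMap.ker (trunc k S - LinearMap.id) := by
    rw [restrictSupport_le_iff]
    intro m hm
    have hmS : m ∉ S := fun h => Set.eq_empty_iff_forall_notMem.1 hAS m ⟨hm, h⟩
    simp [LinearMap.mem_ker, LinearMap.sub_apply, trunc_monomial_not_mem hmS]
  have := this hf
  simpa [LinearMap.mem_ker, LinearMap.sub_apply, sub_eq_zero] using this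

lemma restrictSupport_inf_le (S T : Set (Fin d →₀ ℕ)) :
    restrictSupport k S ⊓ restrictSupport k T ≤ restrictSupport k (S ∩ T) := by
  rintro f ⟨h1, h2⟩
  change ↑f.support ⊆ S at h1; change ↑f.support ⊆ T at h2; change ↑f.support ⊆ S ∩ T
  exact Set.subset_inter h1 h2

lemma mem_restrictSupport_empty {f : MvPolynomial (Fin d) k}
    (hf : f ∈ restrictSupport k (∅ : Set (Fin d →₀ ℕ))) : f = 0 := by
  rw [mem_restrictSupport_iff] at hf
  ext m
  by_contra hc
  exact absurd (hf (MvPolynomial.mem_support_iff.2 (by simpa using hc))) (by simp)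


section Part2
variable {k : Type*} [Field k] {d : ℕ}

lemma restrictScalars_span_X_pow (M : Fin d → ℕ) :
    (Ideal.span (Set.range fun i => (X i : MvPolynomial (Fin d) k) ^ M i)).restrictScalars k
      = restrictSupport k {m | ∃ i, M i ≤ m i} := by
  have himg : (Set.range fun i => (X i : MvPolynomial (Fin d) k) ^ M i)
      = (fun s => monomial s (1:k)) '' (Set.range fun i : Fin d => Finsupp.single i (M i)) := by
    rw [← Set.range_comp]
    apply congrArg
    funext i
    simp [Function.comp, X_pow_eq_monomial]
  ext f
  rw [Submodule.restrictScalars_mem, himg, mem_ideal_span_monomial_image]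
  rw [mem_restrictSupport_iff, Set.subset_def]
  constructor
  · intro h m hm
    obtain ⟨_, ⟨i, rfl⟩, hle⟩ := h m hm
    exact ⟨i, Finsupp.single_le_iff.1 hle⟩
  · intro h m hm
    obtain ⟨i, hi⟩ := h m hm
    exact ⟨Finsupp.single i (M i), ⟨i, rfl⟩, Finsupp.single_le_iff.2 hi⟩

lemma degsum_add (a b : Fin d →₀ ℕ) :
    ((a + b).sum fun _ x => x) = (a.sum fun _ x => x) + b.sum fun _ x => x :=
  Finsupp.sum_add_index' (fun _ => rfl) (fun _ _ _ => rfl)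

lemma coord_le_degsum (m : Fin d →₀ ℕ) (i : Fin d) : m i ≤ m.sum fun _ x => x := by
  rcases Nat.eq_zero_or_pos (m i) with h | h
  · omega
  · exact Finset.single_le_sum (f := fun j => m j) (fun _ _ => Nat.zero_le _)
      (Finsupp.mem_support_iff.2 (by omega))

lemma restrictScalars_span_X_deg (t : ℕ) :
    ((Ideal.span (Set.range (X : Fin d → MvPolynomial (Fin d) k))) ^ t).restrictScalars k
      = restrictSupport k {m | t ≤ m.sum fun _ a => a} := by
  have hX : (Set.range (X : Fin d → MvPolynomial (Fin d) k))
      = Set.range fun i => (X i : MvPolynomial (Fin d) k) ^ (1 : ℕ) := by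
    simp
  induction t with
  | zero =>
    rw [pow_zero, Ideal.one_eq_top]
    have h0 : {m : Fin d →₀ ℕ | 0 ≤ m.sum fun _ a => a} = Set.univ := by
      ext m; simp
    rw [h0]
    ext f
    simp [mem_restrictSupport_iff]
  | succ t ih =>
    rw [pow_succ]
    apply le_antisymm
    · intro f hf
      rw [Submodule.restrictScalars_mem] at hf
      refine Submodule.mul_induction_on hf ?_ ?_
      · intro a ha b hb
        have ha' : a ∈ restrictSupport k {m : Fin d →₀ ℕ | t ≤ m.sum fun _ x => x} := by
          rw [← ih]; exact ha
        have hb' : b ∈ restrictSupport k {m : Fin d →₀ ℕ | ∃ i, 1 ≤ m i} := by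
          rw [← restrictScalars_span_X_pow (fun _ : Fin d => 1), Submodule.restrictScalars_mem]
          rw [hX] at hb; exact hb
        rw [mem_restrictSupport_iff] at ha' hb' ⊢
        intro m hm
        obtain ⟨u, hu, v, hv, rfl⟩ := Finset.mem_add.1 (MvPolynomial.support_mul _ _ hm)
        have h1 : t ≤ u.sum fun _ x => x := ha' hu
        have h2 : 1 ≤ v.sum fun _ x => x := by
          obtain ⟨i, hi⟩ := hb' hv
          exact le_trans hi (coord_le_degsum v i)
        show t + 1 ≤ _
        rw [degsum_add]
        omega
      · intro x y hx hy
        exact add_mem hx hy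
    · rw [restrictSupport_le_iff]
      intro m hm
      have hm' : t + 1 ≤ m.sum fun _ x => x := hm
      have hne : ∃ i, 1 ≤ m i := by
        by_contra h
        push_neg at h
        have : m = 0 := by ext i; have := h i; simp only [Finsupp.coe_zero, Pi.zero_apply]; omega
        rw [this] at hm'
        simp at hm'
      obtain ⟨i, hi⟩ := hne
      have hle : Finsupp.single i 1 ≤ m := Finsupp.single_le_iff.2 hi
      set m' := m - Finsupp.single i 1 with hm'def
      have hkey : Finsupp.single i 1 + m' = m := add_tsub_cancel_of_le hle
      have hdeg1 : ((Finsupp.single i 1 : Fin d →₀ ℕ).sum fun _ x => x) = 1 := by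
        rw [Finsupp.sum_single_index]; rfl
      have hdeg' : t ≤ m'.sum fun _ x => x := by
        have := degsum_add (Finsupp.single i 1) m'
        rw [hkey, hdeg1] at this
        omega
      have h1 : monomial m' (1:k) ∈ (Ideal.span (Set.range (X : Fin d → MvPolynomial (Fin d) k))) ^ t := by
        rw [← Submodule.restrictScalars_mem k, ih]
        exact monomial_mem_restrictSupport hdeg' 1
      have h2 : (X i : MvPolynomial (Fin d) k) ∈ Ideal.span (Set.range (X : Fin d → MvPolynomial (Fin d) k)) :=
        Ideal.subset_span ⟨i, rfl⟩
      have := Ideal.mul_mem_mul h1 h2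
      rw [Submodule.restrictScalars_mem]
      have heq : monomial m' (1:k) * X i = monomial m 1 := by
        rw [show (X i : MvPolynomial (Fin d) k) = monomial (Finsupp.single i 1) 1 by
          rw [← X_pow_eq_monomial, pow_one]]
        rw [monomial_mul, one_mul, add_comm, hkey]
      rwa [heq] at this

variable (I : Ideal (MvPolynomial (Fin d) k))

/-- the quotient map as a `k`-linear map. -/
def pil : MvPolynomial (Fin d) k →ₗ[k] (MvPolynomial (Fin d) k ⧸ I) :=
  (Ideal.Quotient.mkₐ k I).toLinearMap

lemma pil_apply (f : MvPolynomial (Fin d) k) : pil I f = Ideal.Quotient.mk I f := rfl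

lemma ker_pil : LinearMap.ker (pil I) = I.restrictScalars k := by
  ext f
  simp [pil, LinearMap.mem_ker, Ideal.Quotient.mkₐ_eq_mk, Ideal.Quotient.eq_zero_iff_mem]

lemma restrictScalars_map_ideal (A : Ideal (MvPolynomial (Fin d) k)) :
    (Ideal.map (Ideal.Quotient.mk I) A).restrictScalars k
      = Submodule.map (pil I) (A.restrictScalars k) := by
  ext x
  rw [Submodule.restrictScalars_mem,
    Ideal.mem_map_iff_of_surjective _ Ideal.Quotient.mk_surjective, Submodule.mem_map]
  constructor
  · rintro ⟨y, hy, rfl⟩; exact ⟨y, hy, rfl⟩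
  · rintro ⟨y, hy, rfl⟩; exact ⟨y, hy, rfl⟩

variable {I} {S : Set (Fin d →₀ ℕ)} (hIS : I.restrictScalars k = restrictSupport k S)

include hIS

lemma pil_trunc : (pil I).comp (trunc k S) = pil I := by
  apply (basisMonomials (Fin d) k).ext
  intro m
  show pil I (trunc k S (monomial m 1)) = pil I (monomial m 1)
  by_cases h : m ∈ S
  · rw [trunc_monomial_mem h, map_zero]
    symm
    rw [pil_apply, Ideal.Quotient.eq_zero_iff_mem, ← Submodule.restrictScalars_mem k, hIS]
    exact monomial_mem_restrictSupport h 1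
  · rw [trunc_monomial_not_mem h]

lemma pil_trunc_apply (f : MvPolynomial (Fin d) k) : pil I (trunc k S f) = pil I f :=
  LinearMap.congr_fun (pil_trunc hIS) f

lemma finrank_map_restrictSupport (A : Set (Fin d →₀ ℕ)) (hfin : (A \ S).Finite) :
    Module.finrank k (Submodule.map (pil I) (restrictSupport k A)) = (A \ S).ncard := by
  classical
  haveI := hfin.fintype
  set v : ↥(A \ S) → (MvPolynomial (Fin d) k ⧸ I) := fun m => pil I (monomial ↑m 1) with hv
  have hspan : Submodule.map (pil I) (restrictSupport k A) = Submodule.span k (Set.range v) := by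
    rw [restrictSupport_eq_span, Submodule.map_span]
    apply le_antisymm
    · rw [Submodule.span_le]
      rintro _ ⟨_, ⟨m, hm, rfl⟩, rfl⟩
      by_cases hS : m ∈ S
      · have hz : pil I (monomial m 1) = 0 := by
          rw [pil_apply, Ideal.Quotient.eq_zero_iff_mem, ← Submodule.restrictScalars_mem k, hIS]
          exact monomial_mem_restrictSupport hS 1
        show pil I (monomial m 1) ∈ _
        rw [hz]
        exact zero_mem _
      · exact Submodule.subset_span ⟨⟨m, hm, hS⟩, rfl⟩
    · rw [Submodule.span_le]
      rintro _ ⟨⟨m, hm⟩, rfl⟩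
      exact Submodule.subset_span ⟨monomial m 1, ⟨m, hm.1, rfl⟩, rfl⟩
  have hu : LinearIndependent k (fun m : ↥(A \ S) => monomial (↑m : Fin d →₀ ℕ) (1:k)) :=
    (basisMonomials (Fin d) k).linearIndependent.comp _ Subtype.coe_injective
  have hdisj : Disjoint (Submodule.span k (Set.range fun m : ↥(A \ S) =>
      monomial (↑m : Fin d →₀ ℕ) (1:k))) (LinearMap.ker (pil I)) := by
    rw [ker_pil, hIS]
    have hsub : Submodule.span k (Set.range fun m : ↥(A \ S) => monomial (↑m : Fin d →₀ ℕ) (1:k))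
        ≤ restrictSupport k (A \ S) := by
      rw [Submodule.span_le]
      rintro _ ⟨⟨m, hm⟩, rfl⟩
      exact monomial_mem_restrictSupport hm 1
    refine Disjoint.mono_left hsub ?_
    rw [disjoint_iff, eq_bot_iff]
    intro x hx
    have := restrictSupport_inf_le (k := k) (A \ S) S hx
    rw [Set.diff_inter_self] at this
    simp [mem_restrictSupport_empty this]
  have hvli : LinearIndependent k v := hu.map hdisj
  rw [hspan, finrank_span_eq_card hvli, Set.ncard_eq_toFinset_card', Set.toFinset_card]

lemma map_restrictSupport_inf (A B : Set (Fin d →₀ ℕ)) :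
    Submodule.map (pil I) (restrictSupport k A) ⊓ Submodule.map (pil I) (restrictSupport k B)
      = Submodule.map (pil I) (restrictSupport k (A ∩ B)) := by
  apply le_antisymm
  · rintro x ⟨⟨f, hf, rfl⟩, g, hg, hgf⟩
    have hker : f - g ∈ restrictSupport k S := by
      rw [← hIS, Submodule.restrictScalars_mem, ← Ideal.Quotient.eq_zero_iff_mem]
      rw [← pil_apply, map_sub, hgf, sub_self]
    have h1 : trunc k S f = trunc k S g := by
      have h0 := trunc_eq_zero_of_mem hker
      rw [map_sub, sub_eq_zero] at h0
      exact h0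
    refine ⟨trunc k S f, ?_, pil_trunc_apply hIS f⟩
    have hfA : trunc k S f ∈ restrictSupport k (A \ S) := trunc_mem_restrictSupport hf
    have hgB : trunc k S f ∈ restrictSupport k (B \ S) := by
      rw [h1]; exact trunc_mem_restrictSupport hg
    have hmem : trunc k S f ∈ restrictSupport k ((A \ S) ∩ (B \ S)) :=
      restrictSupport_inf_le _ _ ⟨hfA, hgB⟩
    exact restrictSupport_mono (R := k) (by intro x hx; exact ⟨hx.1.1, hx.2.1⟩) hmem
  · exact le_inf
      (Submodule.map_mono (restrictSupport_mono (R := k) Set.inter_subset_left))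
      (Submodule.map_mono (restrictSupport_mono (R := k) Set.inter_subset_right))

lemma pil_surj_restrict : Function.Surjective
    ((pil I).comp (Submodule.subtype (restrictSupport k Sᶜ))) := by
  intro x
  obtain ⟨f, rfl⟩ := Ideal.Quotient.mk_surjective x
  refine ⟨⟨trunc k S f, ?_⟩, pil_trunc_apply hIS f⟩
  have : trunc k S f ∈ restrictSupport k (Set.univ \ S) :=
    trunc_mem_restrictSupport (by rw [mem_restrictSupport_iff]; exact Set.subset_univ _)
  rwa [Set.compl_eq_univ_diff]

lemma module_finite_quotient (hfin : Sᶜ.Finite) :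
    Module.Finite k (MvPolynomial (Fin d) k ⧸ I) := by
  haveI := hfin.fintype
  haveI : Module.Finite k (restrictSupport k Sᶜ) :=
    Module.Finite.of_basis (basisRestrictSupport k Sᶜ)
  exact Module.Finite.of_surjective _ (pil_surj_restrict hIS)

lemma finrank_quotient_ideal (hfin : Sᶜ.Finite) :
    Module.finrank k (MvPolynomial (Fin d) k ⧸ I) = Sᶜ.ncard := by
  haveI := hfin.fintype
  have hinj : Function.Injective ((pil I).comp (Submodule.subtype (restrictSupport k Sᶜ))) := by
    rw [← LinearMap.ker_eq_bot, eq_bot_iff]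
    rintro ⟨f, hf⟩ hker
    simp only [LinearMap.mem_ker, LinearMap.comp_apply, Submodule.subtype_apply] at hker
    have : f ∈ restrictSupport k S := by
      rw [← hIS, Submodule.restrictScalars_mem, ← Ideal.Quotient.eq_zero_iff_mem, ← pil_apply]
      exact hker
    have h0 : f ∈ restrictSupport k (S ∩ Sᶜ) := restrictSupport_inf_le _ _ ⟨this, hf⟩
    rw [Set.inter_compl_self] at h0
    have := mem_restrictSupport_empty h0
    subst this
    simp
  let e : (restrictSupport k Sᶜ) ≃ₗ[k] (MvPolynomial (Fin d) k ⧸ I) :=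
    LinearEquiv.ofBijective _ ⟨hinj, pil_surj_restrict hIS⟩
  rw [← e.finrank_eq, Module.finrank_eq_card_basis (basisRestrictSupport k Sᶜ),
    Set.ncard_eq_toFinset_card', Set.toFinset_card]

end Part2


section Part3
variable {d : ℕ}

lemma compl_up (M : Fin d → ℕ) :
    {m : Fin d →₀ ℕ | ∃ i, M i ≤ m i}ᶜ = {m : Fin d →₀ ℕ | ∀ i, m i < M i} := by
  ext m
  simp [not_le]

lemma finite_bounded (M : Fin d → ℕ) : {m : Fin d →₀ ℕ | ∀ i, m i < M i}.Finite := by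
  have h : {m : Fin d →₀ ℕ | ∀ i, m i < M i}
      = (fun f : Fin d →₀ ℕ => (f : Fin d → ℕ)) ⁻¹' (Set.pi Set.univ fun i => Set.Iio (M i)) := by
    ext m
    simp [Set.mem_pi]
  rw [h]
  exact (Set.Finite.pi fun i => Set.finite_Iio (M i)).preimage DFunLike.coe_injective.injOn

lemma ncard_bounded (M : Fin d → ℕ) :
    {m : Fin d →₀ ℕ | ∀ i, m i < M i}.ncard = ∏ i, M i := by
  classical
  let eqv : {m : Fin d →₀ ℕ | ∀ i, m i < M i} ≃ (∀ i, Fin (M i)) :=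
    { toFun := fun x i => ⟨x.1 i, x.2 i⟩
      invFun := fun v => ⟨Finsupp.equivFunOnFinite.symm (fun i => (v i : ℕ)), fun i => by
        simp⟩
      left_inv := fun x => Subtype.ext (by ext i; simp)
      right_inv := fun v => by ext i; simp }
  rw [← Nat.card_coe_set_eq, Nat.card_congr eqv, Nat.card_pi]
  simp

lemma two_coords_le_degsum (m : Fin d →₀ ℕ) (i j : Fin d) (hij : i ≠ j) :
    m i + m j ≤ m.sum fun _ x => x := by
  rcases Nat.eq_zero_or_pos (m i) with h | h
  · rw [h, zero_add]; exact coord_le_degsum m j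
  rcases Nat.eq_zero_or_pos (m j) with h' | h'
  · rw [h', add_zero]; exact coord_le_degsum m i
  have hsub : ({i, j} : Finset (Fin d)) ⊆ m.support := by
    intro x hx
    rcases Finset.mem_insert.1 hx with rfl | hx
    · exact Finsupp.mem_support_iff.2 (by omega)
    · rw [Finset.mem_singleton] at hx
      subst hx
      exact Finsupp.mem_support_iff.2 (by omega)
  calc m i + m j = ∑ x ∈ ({i, j} : Finset (Fin d)), m x := (Finset.sum_pair hij).symm
  _ ≤ ∑ x ∈ m.support, m x := Finset.sum_le_sum_of_subset hsub
  _ = m.sum fun _ x => x := rfl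

end Part3


section Stretch
variable {k : Type*} [Field k] {d : ℕ}

/-- the linear map sending `monomial m 1` to `monomial (q • m) 1`. -/
def stretch (k : Type*) [Field k] {d : ℕ} (q : ℕ) :
    MvPolynomial (Fin d) k →ₗ[k] MvPolynomial (Fin d) k :=
  (basisMonomials (Fin d) k).constr k fun m => monomial (q • m) 1

lemma stretch_monomial (q : ℕ) (m : Fin d →₀ ℕ) :
    stretch k q (monomial m 1) = monomial (q • m) 1 :=
  (basisMonomials (Fin d) k).constr_basis k _ m

lemma smul_finsupp_injective {q : ℕ} (hq : q ≠ 0) :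
    Function.Injective (fun m : Fin d →₀ ℕ => q • m) := by
  intro a b hab
  ext i
  have := DFunLike.congr_fun hab i
  simp only [Finsupp.smul_apply, smul_eq_mul] at this
  exact Nat.eq_of_mul_eq_mul_left (by omega) this

lemma stretch_injective {q : ℕ} (hq : q ≠ 0) :
    Function.Injective (stretch k (d := d) q) := by
  classical
  have hco : ∀ m : Fin d →₀ ℕ, (lcoeff k (q • m)).comp (stretch k q) = lcoeff k m := by
    intro m
    apply (basisMonomials (Fin d) k).ext
    intro m'
    show lcoeff k (q • m) (stretch k q (monomial m' 1)) = lcoeff k m (monomial m' 1)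
    rw [stretch_monomial]
    simp only [lcoeff_apply, coeff_monomial]
    by_cases h : m' = m
    · subst h; simp
    · rw [if_neg h, if_neg (fun hc => h (smul_finsupp_injective hq hc))]
  intro f g hfg
  ext m
  have h1 := LinearMap.congr_fun (hco m) f
  have h2 := LinearMap.congr_fun (hco m) g
  simp only [LinearMap.comp_apply, lcoeff_apply] at h1 h2
  rw [← h1, ← h2, hfg]

lemma stretch_mem_restrictSupport {q : ℕ} {A : Set (Fin d →₀ ℕ)} {f : MvPolynomial (Fin d) k}
    (hf : f ∈ restrictSupport k A) :
    stretch k q f ∈ restrictSupport k ((fun m => q • m) '' A) := by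
  have : restrictSupport k A ≤ Submodule.comap (stretch k q)
      (restrictSupport k ((fun m => q • m) '' A)) := by
    rw [restrictSupport_le_iff]
    intro m hm
    simp only [Submodule.mem_comap, stretch_monomial]
    exact monomial_mem_restrictSupport (Set.mem_image_of_mem _ hm) 1
  exact this hf

end Stretch

end Stmt11Aux

open Stmt11Aux

variable (k : Type*) [Field k] (p d : ℕ) (e : Fin d → ℕ)

/-- The truncated polynomial algebra `k[x₁,…,x_d]/(x₁^{p^{e₁}},…,x_d^{p^{e_d}})`. -/
def TruncAlg : Type _ :=
  MvPolynomial (Fin d) k ⧸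
    Ideal.span (Set.range fun i : Fin d => (X i : MvPolynomial (Fin d) k) ^ p ^ e i)

instance : CommRing (TruncAlg k p d e) := Ideal.Quotient.commRing _
instance : Algebra k (TruncAlg k p d e) := Ideal.Quotient.algebra k

/-- The image of the variable `x_i` in the truncated polynomial algebra. -/
def xbar (i : Fin d) : TruncAlg k p d e :=
  Ideal.Quotient.mk _ (X i)

/-- The maximal ideal `J = (x₁,…,x_d)`. -/
def Jmax : Ideal (TruncAlg k p d e) :=
  Ideal.span (Set.range (xbar k p d e))

/-- The ideal `J_m = (x₁^{p^m},…,x_d^{p^m})`. -/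
def Jn (m : ℕ) : Ideal (TruncAlg k p d e) :=
  Ideal.span (Set.range fun i : Fin d => xbar k p d e i ^ p ^ m)

/-- `Γ_m = k[x₁^{p^m},…,x_d^{p^m}]`, the subalgebra generated by the
`p^m`-th powers of the variables. -/
def Gam (m : ℕ) : Subalgebra k (TruncAlg k p d e) :=
  Algebra.adjoin k (Set.range fun i : Fin d => xbar k p d e i ^ p ^ m)

/-- The ideal of `Γ_{n-1}` generated by the elements `x_i^{p^n}`, so that the
quotient is the Hopf algebra quotient `Γ_{n-1}/Γ_n`. -/
def GamQuotIdeal (n : ℕ) : Ideal (Gam k p d e (n - 1)) :=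
  Ideal.span {a : Gam k p d e (n - 1) | ∃ i : Fin d, (a : TruncAlg k p d e) = xbar k p d e i ^ p ^ n}

instance (S : Submodule k (TruncAlg k p d e)) : AddCommGroup S := Submodule.addCommGroup S


abbrev Ik : Ideal (MvPolynomial (Fin d) k) :=
  Ideal.span (Set.range fun i : Fin d => (X i : MvPolynomial (Fin d) k) ^ p ^ e i)

section Part4
open MvPolynomial

lemma xbar_eq (i : Fin d) : xbar k p d e i = Ideal.Quotient.mk (Ik k p d e) (X i) := rfl

lemma Jn_eq_map (m : ℕ) :
    Jn k p d e m = Ideal.map (Ideal.Quotient.mk (Ik k p d e))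
      (Ideal.span (Set.range fun i : Fin d => (X i : MvPolynomial (Fin d) k) ^ p ^ m)) := by
  show Ideal.span _ = _
  rw [Ideal.map_span, ← Set.range_comp]
  apply congrArg
  apply congrArg
  funext i
  show Ideal.Quotient.mk (Ik k p d e) (X i) ^ p ^ m = Ideal.Quotient.mk (Ik k p d e) (X i ^ p ^ m)
  rw [map_pow]

lemma Jmax_eq_map :
    Jmax k p d e = Ideal.map (Ideal.Quotient.mk (Ik k p d e))
      (Ideal.span (Set.range (X : Fin d → MvPolynomial (Fin d) k))) := by
  show Ideal.span _ = _
  rw [Ideal.map_span, ← Set.range_comp]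
  rfl

lemma restrictScalars_Jn (m : ℕ) :
    Submodule.restrictScalars k (Jn k p d e m)
      = Submodule.map (pil (Ik k p d e))
          (restrictSupport k {x : Fin d →₀ ℕ | ∃ i, p ^ m ≤ x i}) := by
  have := restrictScalars_map_ideal (Ik k p d e)
    (Ideal.span (Set.range fun i : Fin d => (X i : MvPolynomial (Fin d) k) ^ p ^ m))
  rw [restrictScalars_span_X_pow (fun _ : Fin d => p ^ m)] at this
  rw [Jn_eq_map]
  exact this

lemma restrictScalars_Jmax_pow (t : ℕ) :
    Submodule.restrictScalars k (Jmax k p d e ^ t)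
      = Submodule.map (pil (Ik k p d e))
          (restrictSupport k {x : Fin d →₀ ℕ | t ≤ x.sum fun _ a => a}) := by
  have := restrictScalars_map_ideal (Ik k p d e)
    (Ideal.span (Set.range (X : Fin d → MvPolynomial (Fin d) k)) ^ t)
  rw [Ideal.map_pow, restrictScalars_span_X_deg] at this
  rw [Jmax_eq_map]
  exact this


theorem rhs_finrank [Fact p.Prime] (n : ℕ) (hn : 1 ≤ n) :
    Module.finrank k
        ((Submodule.restrictScalars k (Jn k p d e (n - 1)) : Submodule k (TruncAlg k p d e)) ⧸
          Submodule.comap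
            (Submodule.restrictScalars k (Jn k p d e (n - 1))).subtype
            (Submodule.restrictScalars k
              (Jmax k p d e ^ (p ^ (n - 1) + 1) ⊓ Jn k p d e (n - 1))))
      = {i : Fin d | n ≤ e i}.ncard := by
  classical
  have hp : 1 < p := (Fact.out : p.Prime).one_lt
  set q := p ^ (n - 1) with hqdef
  have hq1 : 1 ≤ q := Nat.one_le_pow _ _ (by omega)
  set E := {m : Fin d →₀ ℕ | ∃ i, p ^ e i ≤ m i} with hE
  have hIS : (Ik k p d e).restrictScalars k = restrictSupport k E :=
    restrictScalars_span_X_pow _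
  have hEc : Eᶜ.Finite := by rw [hE, compl_up]; exact finite_bounded _
  haveI : Module.Finite k (TruncAlg k p d e) := module_finite_quotient hIS hEc
  set A₁ := {m : Fin d →₀ ℕ | ∃ i, q ≤ m i} with hA₁
  set A₂ := {m : Fin d →₀ ℕ | q + 1 ≤ m.sum fun _ a => a} with hA₂
  have h1 : Submodule.restrictScalars k (Jn k p d e (n - 1))
      = Submodule.map (pil (Ik k p d e)) (restrictSupport k A₁) := restrictScalars_Jn k p d e _
  have h2 : Submodule.restrictScalars k (Jmax k p d e ^ (q + 1) ⊓ Jn k p d e (n - 1))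
      = Submodule.map (pil (Ik k p d e)) (restrictSupport k (A₂ ∩ A₁)) := by
    have hinf : Submodule.restrictScalars k (Jmax k p d e ^ (q + 1) ⊓ Jn k p d e (n - 1))
        = Submodule.restrictScalars k (Jmax k p d e ^ (q + 1))
          ⊓ Submodule.restrictScalars k (Jn k p d e (n - 1)) := rfl
    rw [hinf, restrictScalars_Jmax_pow, restrictScalars_Jn]
    exact map_restrictSupport_inf hIS _ _
  have hfin1 : (A₁ \ E).Finite := hEc.subset fun x hx => hx.2
  have hfin2 : ((A₂ ∩ A₁) \ E).Finite := hEc.subset fun x hx => hx.2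
  have hr1 : Module.finrank k (Submodule.restrictScalars k (Jn k p d e (n - 1))
      : Submodule k (TruncAlg k p d e)) = (A₁ \ E).ncard := by
    rw [h1]; exact finrank_map_restrictSupport hIS A₁ hfin1
  have hr2 : Module.finrank k (Submodule.restrictScalars k
      (Jmax k p d e ^ (q + 1) ⊓ Jn k p d e (n - 1)) : Submodule k (TruncAlg k p d e))
      = ((A₂ ∩ A₁) \ E).ncard := by
    rw [h2]; exact finrank_map_restrictSupport hIS _ hfin2
  have hle : (Submodule.restrictScalars k (Jmax k p d e ^ (q + 1) ⊓ Jn k p d e (n - 1))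
      : Submodule k (TruncAlg k p d e)) ≤ Submodule.restrictScalars k (Jn k p d e (n - 1)) :=
    fun x hx => hx.2
  haveI : IsNoetherian k (TruncAlg k p d e) := @isNoetherian_of_isNoetherianRing_of_finite k (TruncAlg k p d e) _ _ Algebra.toModule _ this
  haveI : Module.Finite k ↥(Submodule.restrictScalars k (Jn k p d e (n - 1))) :=
    Module.Finite.of_injective (Submodule.restrictScalars k (Jn k p d e (n - 1))).subtype
      Subtype.val_injective
  have key := Submodule.finrank_quotient_add_finrank
    (Submodule.comap (Submodule.restrictScalars k (Jn k p d e (n - 1))).subtype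
      (Submodule.restrictScalars k (Jmax k p d e ^ (q + 1) ⊓ Jn k p d e (n - 1))))
  rw [(Submodule.comapSubtypeEquivOfLe hle).finrank_eq, hr1, hr2] at key
  -- set combinatorics
  have hsub : ((A₂ ∩ A₁) \ E) ⊆ (A₁ \ E) := fun x hx => ⟨hx.1.2, hx.2⟩
  have hcard := Set.ncard_diff_add_ncard_of_subset hsub hfin1
  have himg : (A₁ \ E) \ ((A₂ ∩ A₁) \ E) = (fun i => Finsupp.single i q) '' {i : Fin d | n ≤ e i} := by
    ext m
    constructor
    · intro hm
      simp only [Set.mem_diff, Set.mem_inter_iff] at hm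
      obtain ⟨⟨hA1m, hEm⟩, hnot⟩ := hm
      obtain ⟨i, hi⟩ := hA1m
      have hA2m : m ∉ A₂ := fun h => hnot ⟨⟨h, ⟨i, hi⟩⟩, hEm⟩
      have hdeg : (m.sum fun _ x => x) ≤ q := by
        by_contra h
        exact hA2m (by rw [hA₂]; simp only [Set.mem_setOf_eq]; omega)
      have hmi : m i = q := le_antisymm (le_trans (coord_le_degsum m i) hdeg) hi
      have hothers : ∀ j, j ≠ i → m j = 0 := by
        intro j hj
        have := two_coords_le_degsum m i j (fun h => hj h.symm)
        omega
      have hme : m = Finsupp.single i q := by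
        ext j
        rcases eq_or_ne j i with rfl | hj
        · rw [hmi, Finsupp.single_eq_same]
        · rw [hothers j hj, Finsupp.single_eq_of_ne hj]
      refine ⟨i, ?_, hme.symm⟩
      have hilt : q < p ^ e i := by
        by_contra h
        exact hEm ⟨i, by omega⟩
      have : n - 1 < e i := (Nat.pow_lt_pow_iff_right hp).1 hilt
      simp only [Set.mem_setOf_eq]
      omega
    · rintro ⟨i, hi, rfl⟩
      simp only [Set.mem_setOf_eq] at hi
      have h1m : Finsupp.single i q ∈ A₁ := ⟨i, by simp⟩
      have hEm : Finsupp.single i q ∉ E := by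
        rintro ⟨j, hj⟩
        rcases eq_or_ne j i with rfl | hne
        · rw [Finsupp.single_eq_same] at hj
          have : q < p ^ e j := (Nat.pow_lt_pow_iff_right hp).2 (by omega)
          omega
        · rw [Finsupp.single_eq_of_ne hne] at hj
          have : 1 ≤ p ^ e j := Nat.one_le_pow _ _ (by omega)
          omega
      have hdeg : ((Finsupp.single i q : Fin d →₀ ℕ).sum fun _ x => x) = q :=
        Finsupp.sum_single_index rfl
      refine ⟨⟨h1m, hEm⟩, ?_⟩
      rintro ⟨⟨h2m, _⟩, _⟩
      rw [hA₂] at h2m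
      simp only [Set.mem_setOf_eq] at h2m
      omega
  have hinj : Function.Injective (fun i : Fin d => Finsupp.single i q) :=
    Finsupp.single_left_injective (by omega)
  rw [himg, Set.ncard_image_of_injective _ hinj] at hcard
  omega

end Part4

section Part5
open MvPolynomial

/-- the algebra map onto `Γ_{n-1}` sending `X i` to `x_i^{p^{n-1}}`. -/
def psiA (n : ℕ) : MvPolynomial (Fin d) k →ₐ[k] (Gam k p d e (n - 1)) :=
  aeval fun i => (⟨xbar k p d e i ^ p ^ (n - 1),
    Algebra.subset_adjoin ⟨i, rfl⟩⟩ : Gam k p d e (n - 1))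

lemma psiA_coe (n : ℕ) (f : MvPolynomial (Fin d) k) :
    (psiA k p d e n f : TruncAlg k p d e)
      = aeval (fun i => xbar k p d e i ^ p ^ (n - 1)) f := by
  have h : (Gam k p d e (n - 1)).val.comp (psiA k p d e n)
      = aeval (fun i => xbar k p d e i ^ p ^ (n - 1)) := by
    apply algHom_ext
    intro i
    simp [psiA]
  exact DFunLike.congr_fun h f

lemma psiA_surj (n : ℕ) : Function.Surjective (psiA k p d e n) := by
  rintro ⟨x, hx⟩
  have hx' : x ∈ Algebra.adjoin k
      (Set.range fun i => xbar k p d e i ^ p ^ (n - 1)) := hx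
  rw [Algebra.adjoin_range_eq_range_aeval] at hx'
  obtain ⟨f, hf⟩ := (AlgHom.mem_range _).1 hx'
  exact ⟨f, Subtype.ext (by rw [psiA_coe]; exact hf)⟩

/-- the composite `MvPolynomial → Γ_{n-1} → Γ_{n-1}/Γ_n`. -/
def rho (n : ℕ) : MvPolynomial (Fin d) k →ₐ[k] (Gam k p d e (n - 1) ⧸ GamQuotIdeal k p d e n) :=
  (Ideal.Quotient.mkₐ k (GamQuotIdeal k p d e n)).comp (psiA k p d e n)

lemma rho_surj (n : ℕ) : Function.Surjective (rho k p d e n) :=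
  (Ideal.Quotient.mkₐ_surjective k _).comp (psiA_surj k p d e n)

lemma psiA_eq_stretch (n : ℕ) (f : MvPolynomial (Fin d) k) :
    (psiA k p d e n f : TruncAlg k p d e)
      = pil (Ik k p d e) (stretch k (p ^ (n - 1)) f) := by
  set q := p ^ (n - 1) with hq
  rw [psiA_coe]
  have h : (aeval (fun i => xbar k p d e i ^ q) :
        MvPolynomial (Fin d) k →ₐ[k] TruncAlg k p d e).toLinearMap
      = (pil (Ik k p d e)).comp (stretch k q) := by
    apply (basisMonomials (Fin d) k).ext
    intro m
    show aeval (fun i => xbar k p d e i ^ q) (monomial m 1)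
      = pil (Ik k p d e) (stretch k q (monomial m 1))
    rw [stretch_monomial, aeval_monomial, map_one, one_mul, pil_apply]
    have hsm : q • m = Finsupp.mapRange (q * ·) (mul_zero q) m := by
      ext i
      simp [Finsupp.mapRange_apply]
    have lhs_eq : (m.prod fun i a => (xbar k p d e i ^ q) ^ a)
        = m.prod fun i a => Ideal.Quotient.mk (Ik k p d e) (X i) ^ (q * a) :=
      Finsupp.prod_congr fun i _ => by exact (pow_mul (xbar k p d e i) q _).symm
    have rhs_eq : Ideal.Quotient.mk (Ik k p d e) (monomial (q • m) (1:k))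
        = m.prod fun i a => Ideal.Quotient.mk (Ik k p d e) (X i) ^ (q * a) := by
      rw [show (monomial (q • m) (1:k)) = (q • m).prod fun i a => X i ^ a by
          rw [monomial_eq, map_one, one_mul],
        hsm, Finsupp.prod_mapRange_index (fun i => pow_zero _), map_finsuppProd]
      exact Finsupp.prod_congr fun i _ => by rw [map_pow]
    rw [lhs_eq, rhs_eq]
  exact (LinearMap.congr_fun h f).trans rfl

lemma coe_GamQuotIdeal_mem (n : ℕ) {a : Gam k p d e (n - 1)} (ha : a ∈ GamQuotIdeal k p d e n) :
    (a : TruncAlg k p d e) ∈ Jn k p d e n := by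
  have hinc : GamQuotIdeal k p d e n
      ≤ Ideal.comap ((Gam k p d e (n - 1)).val.toRingHom) (Jn k p d e n) := by
    rw [GamQuotIdeal, Ideal.span_le]
    rintro a ⟨i, hi⟩
    show (a : TruncAlg k p d e) ∈ Jn k p d e n
    rw [hi]
    exact Ideal.subset_span ⟨i, rfl⟩
  exact hinc ha

lemma ker_rho [Fact p.Prime] (n : ℕ) (hn : 1 ≤ n) :
    RingHom.ker (rho k p d e n)
      = Ideal.span (Set.range fun i => (X i : MvPolynomial (Fin d) k)
          ^ (if n ≤ e i then p else 1)) := by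
  classical
  have hp : 1 < p := (Fact.out : p.Prime).one_lt
  set q := p ^ (n - 1) with hqdef
  have hq1 : 1 ≤ q := Nat.one_le_pow _ _ (by omega)
  have hqp : q * p = p ^ n := by
    rw [hqdef, ← pow_succ]
    congr 1
    omega
  set N : Fin d → ℕ := fun i => if n ≤ e i then p else 1 with hN
  -- first inclusion: generators are in the kernel
  have hsup : Ideal.span (Set.range fun i => (X i : MvPolynomial (Fin d) k) ^ N i)
      ≤ RingHom.ker (rho k p d e n) := by
    rw [Ideal.span_le]
    rintro _ ⟨i, rfl⟩
    show (X i : MvPolynomial (Fin d) k) ^ N i ∈ RingHom.ker (rho k p d e n)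
    rw [RingHom.mem_ker, map_pow]
    have hrX : rho k p d e n (X i)
        = Ideal.Quotient.mk (GamQuotIdeal k p d e n) (psiA k p d e n (X i)) := rfl
    by_cases hni : n ≤ e i
    · rw [hN]
      simp only [hni, if_true]
      rw [hrX, ← map_pow, Ideal.Quotient.eq_zero_iff_mem]
      apply Ideal.subset_span
      refine ⟨i, ?_⟩
      show ((psiA k p d e n (X i) ^ p : Gam k p d e (n - 1)) : TruncAlg k p d e) = _
      rw [SubmonoidClass.coe_pow, psiA_coe, aeval_X, ← pow_mul, hqp]
    · rw [hN]
      simp only [hni, if_false, pow_one]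
      have hz : psiA k p d e n (X i) = 0 := by
        apply Subtype.ext
        rw [psiA_coe, aeval_X]
        show xbar k p d e i ^ q = (0 : TruncAlg k p d e)
        have hXq : (X i : MvPolynomial (Fin d) k) ^ q ∈ Ik k p d e := by
          have hle : p ^ e i ≤ q := Nat.pow_le_pow_right (by omega) (by omega)
          have hsplit : (X i : MvPolynomial (Fin d) k) ^ q
              = X i ^ p ^ e i * X i ^ (q - p ^ e i) := by
            rw [← pow_add]
            congr 1
            omega
          rw [hsplit]
          exact Ideal.mul_mem_right _ _ (Ideal.subset_span ⟨i, rfl⟩)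
        rw [xbar_eq]
        show Ideal.Quotient.mk (Ik k p d e) (X i) ^ q = 0
        rw [← map_pow, Ideal.Quotient.eq_zero_iff_mem]
        exact hXq
      rw [hrX, hz, map_zero]
  apply le_antisymm ?_ hsup
  -- harder inclusion
  intro f hf
  set E := {m : Fin d →₀ ℕ | ∃ i, p ^ e i ≤ m i} with hE
  have hIS : (Ik k p d e).restrictScalars k = restrictSupport k E :=
    restrictScalars_span_X_pow _
  set S' := {m : Fin d →₀ ℕ | ∃ i, N i ≤ m i} with hS'
  have hNS : (Ideal.span (Set.range fun i => (X i : MvPolynomial (Fin d) k) ^ N i)).restrictScalars k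
      = restrictSupport k S' := restrictScalars_span_X_pow N
  set r := trunc k S' f with hr
  have hfr : f - r ∈ Ideal.span (Set.range fun i => (X i : MvPolynomial (Fin d) k) ^ N i) := by
    rw [← Submodule.restrictScalars_mem k, hNS]
    exact sub_trunc_mem S' f
  have hρr : rho k p d e n r = 0 := by
    have h1 : rho k p d e n (f - r) = 0 := RingHom.mem_ker.1 (hsup hfr)
    have h2 : rho k p d e n f = 0 := RingHom.mem_ker.1 hf
    rw [map_sub, h2, zero_sub, neg_eq_zero] at h1
    exact h1
  have hGQI : psiA k p d e n r ∈ GamQuotIdeal k p d e n :=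
    Ideal.Quotient.eq_zero_iff_mem.1 hρr
  have hcoe : (psiA k p d e n r : TruncAlg k p d e) ∈ Jn k p d e n :=
    coe_GamQuotIdeal_mem k p d e n hGQI
  set V := {m : Fin d →₀ ℕ | ∃ i, p ^ n ≤ m i} with hV
  have hmap : pil (Ik k p d e) (stretch k q r)
      ∈ Submodule.map (pil (Ik k p d e)) (restrictSupport k V) := by
    rw [← restrictScalars_Jn]
    rw [← psiA_eq_stretch]
    exact hcoe
  obtain ⟨h, hh, hph⟩ := hmap
  -- trunc E of both sides
  have hdiff : stretch k q r - h ∈ restrictSupport k E := by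
    rw [← hIS, Submodule.restrictScalars_mem, ← Ideal.Quotient.eq_zero_iff_mem, ← pil_apply,
      map_sub, hph, sub_self]
  have htr : trunc k E (stretch k q r) = trunc k E h := by
    have h0 := trunc_eq_zero_of_mem hdiff
    rw [map_sub, sub_eq_zero] at h0
    exact h0
  -- the support of `stretch q r`
  have hrsupp : r ∈ restrictSupport k S'ᶜ := by
    have : r ∈ restrictSupport k (Set.univ \ S') :=
      trunc_mem_restrictSupport
        (by rw [mem_restrictSupport_iff]; exact Set.subset_univ _)
    rwa [Set.compl_eq_univ_diff]
  have hssupp : stretch k q r ∈ restrictSupport k ((fun m => q • m) '' S'ᶜ) :=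
    stretch_mem_restrictSupport hrsupp
  have hbound : ∀ m : Fin d →₀ ℕ, m ∈ S'ᶜ → ∀ i, q * m i < p ^ n ∧ q * m i < p ^ e i := by
    intro m hm i
    rw [hS', compl_up] at hm
    have hmi := hm i
    by_cases hni : n ≤ e i
    · rw [hN] at hmi
      simp only [hni, if_true] at hmi
      have h1 : q * m i ≤ q * (p - 1) := Nat.mul_le_mul_left _ (by omega)
      have h2 : q * (p - 1) + q = p ^ n := by
        have h3 : q * (p - 1) + q = q * p := by
          have : (p - 1) + 1 = p := by omega
          calc q * (p - 1) + q = q * ((p - 1) + 1) := by ring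
          _ = q * p := by rw [this]
        omega
      have h4 : p ^ n ≤ p ^ e i := Nat.pow_le_pow_right (by omega) hni
      omega
    · rw [hN] at hmi
      simp only [hni, if_false] at hmi
      have hm0 : m i = 0 := by omega
      have h5 : 1 ≤ p ^ n := Nat.one_le_pow _ _ (by omega)
      have h6 : 1 ≤ p ^ e i := Nat.one_le_pow _ _ (by omega)
      rw [hm0]
      omega
  have hdisjE : ((fun m => q • m) '' S'ᶜ) ∩ E = ∅ := by
    rw [Set.eq_empty_iff_forall_notMem]
    rintro x ⟨⟨m, hm, rfl⟩, j, hj⟩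
    have := (hbound m hm j).2
    rw [Finsupp.smul_apply, smul_eq_mul] at hj
    omega
  have hdisjV : ((fun m => q • m) '' S'ᶜ) ∩ V = ∅ := by
    rw [Set.eq_empty_iff_forall_notMem]
    rintro x ⟨⟨m, hm, rfl⟩, j, hj⟩
    have := (hbound m hm j).1
    rw [Finsupp.smul_apply, smul_eq_mul] at hj
    omega
  have hseq : stretch k q r = trunc k E h := by
    rw [← htr]
    exact (trunc_eq_self hssupp hdisjE).symm
  have hmem2 : trunc k E h ∈ restrictSupport k (V \ E) := trunc_mem_restrictSupport hh
  have hmem2' : stretch k q r ∈ restrictSupport k (V \ E) := by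
    rw [hseq]; exact hmem2
  have hzero : stretch k q r = 0 := by
    have hmem3 : stretch k q r ∈ restrictSupport k ((((fun m => q • m) '' S'ᶜ) ∩ (V \ E))) :=
      restrictSupport_inf_le _ _ ⟨hssupp, hmem2'⟩
    have hempty : ((((fun m => q • m) '' S'ᶜ) ∩ (V \ E))) = (∅ : Set (Fin d →₀ ℕ)) := by
      rw [Set.eq_empty_iff_forall_notMem]
      rintro x ⟨hx1, hx2, _⟩
      exact Set.eq_empty_iff_forall_notMem.1 hdisjV x ⟨hx1, hx2⟩
    rw [hempty] at hmem3
    exact mem_restrictSupport_empty hmem3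
  have hr0 : r = 0 := stretch_injective (q := q) (by omega)
    (hzero.trans (map_zero (stretch k q)).symm)
  rw [show f = f - r by rw [hr0, sub_zero]]
  exact hfr
end Part5

section Part6
open MvPolynomial

theorem lhs_finrank [Fact p.Prime] (n : ℕ) (hn : 1 ≤ n) :
    Module.finrank k (Gam k p d e (n - 1) ⧸ GamQuotIdeal k p d e n)
      = p ^ {i : Fin d | n ≤ e i}.ncard := by
  classical
  have e1 := Ideal.quotientKerAlgEquivOfSurjective (rho_surj k p d e n)
  rw [← e1.toLinearEquiv.finrank_eq]
  have hNS' : (RingHom.ker (rho k p d e n)).restrictScalars k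
      = restrictSupport k {m : Fin d →₀ ℕ | ∃ i, (if n ≤ e i then p else 1) ≤ m i} := by
    rw [ker_rho k p d e n hn]
    exact restrictScalars_span_X_pow _
  have hfin : ({m : Fin d →₀ ℕ | ∃ i, (if n ≤ e i then p else 1) ≤ m i})ᶜ.Finite := by
    rw [compl_up (fun i => if n ≤ e i then p else 1)]
    exact finite_bounded _
  rw [finrank_quotient_ideal hNS' hfin, compl_up (fun i => if n ≤ e i then p else 1),
    ncard_bounded (fun i => if n ≤ e i then p else 1)]
  rw [show ({i : Fin d | n ≤ e i}).ncard = (Finset.univ.filter fun i => n ≤ e i).card by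
    rw [Set.ncard_eq_toFinset_card', Set.toFinset_setOf]]
  rw [Finset.prod_ite, Finset.prod_const, Finset.prod_const, one_pow, mul_one]

end Part6

section Part7
theorem final_check [Fact p.Prime] [CharP k p]
    (he : ∀ i, 1 ≤ e i) (n : ℕ) (hn : 1 ≤ n) :
    Module.finrank k (Gam k p d e (n - 1) ⧸ GamQuotIdeal k p d e n) =
      p ^ Module.finrank k
        ((Submodule.restrictScalars k (Jn k p d e (n - 1)) : Submodule k (TruncAlg k p d e)) ⧸
          Submodule.comap
            (Submodule.restrictScalars k (Jn k p d e (n - 1))).subtype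
            (Submodule.restrictScalars k
              (Jmax k p d e ^ (p ^ (n - 1) + 1) ⊓ Jn k p d e (n - 1)))) := by
  rw [rhs_finrank k p d e n hn, lhs_finrank k p d e n hn]


end Part7

/-- In `K = k[x₁,…,x_d]/(x₁^{p^{e₁}},…,x_d^{p^{e_d}})`, for `n ≥ 1`,
`dim_k (Γ_{n-1}/Γ_n) = p ^ dim_k (J_{n-1}/(J^{p^{n-1}+1} ∩ J_{n-1}))`. -/
theorem stmt_11 (k : Type*) [Field k] (p : ℕ) [Fact p.Prime] [CharP k p]
    (d : ℕ) (e : Fin d → ℕ) (he : ∀ i, 1 ≤ e i) (n : ℕ) (hn : 1 ≤ n) :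
    Module.finrank k (Gam k p d e (n - 1) ⧸ GamQuotIdeal k p d e n) =
      p ^ Module.finrank k
        ((Submodule.restrictScalars k (Jn k p d e (n - 1)) : Submodule k (TruncAlg k p d e)) ⧸
          Submodule.comap
            (Submodule.restrictScalars k (Jn k p d e (n - 1))).subtype
            (Submodule.restrictScalars k
              (Jmax k p d e ^ (p ^ (n - 1) + 1) ⊓ Jn k p d e (n - 1)))) := by
  exact final_check k p d e he n hn

end
end
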